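/- arXiv:1601.03200 — 2 statements merged into one kernel-verified Lean document; each statement's English description precedes it below -/
import Mathlib

section
/- Let F be a GIFS of order m on a complete metric space X. For every nonempty compact D ⊆ X, lim_{k→∞} max{diam(f_α(D_k)) : α ∈ ₖΩ} = 0, where D_k is the k-fold iterated m-fold product of D. In particular, max{diam f_α(D_k) : α ∈ ₖΩ} ≤ φ^(k)(diam D) for a suitable witness φ. -/
open TopologicalSpace Filter Metric

/-- The code space levels for a GIFS: `GifsCode n m k` represents `ₖ₊₁Ω`
(sequences `(α¹,...,α^{k+1})` with `α¹ ∈ {1,...,n}`, `α^{s+1} ∈ Ω_s^m`), in the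
tree representation `ₖ₊₁Ω ≅ Ω₁ × (ₖΩ)^m`. -/
def GifsCode (n m : ℕ) : ℕ → Type
  | 0 => Fin n
  | k + 1 => Fin n × (Fin m → GifsCode n m k)

/-- The iterated product spaces: `GifsSp X m k` represents `X_{k+1}`,
where `X_1 = X^m` and `X_{k+1} = X_k^m`. -/
def GifsSp (X : Type*) (m : ℕ) : ℕ → Type _
  | 0 => Fin m → X
  | k + 1 => Fin m → GifsSp X m k

/-- The iterated maps `f_α : X_{k+1} → X` for `α ∈ ₖ₊₁Ω`, defined by
`f_{(α¹,...,α^{k+1})}(x₁,...,x_m) = f_{α¹}(f_{α(1)}(x₁),...,f_{α(m)}(x_m))`. -/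
def gifsIter {X : Type*} {n m : ℕ} (f : Fin n → (Fin m → X) → X) :
    ∀ k, GifsCode n m k → GifsSp X m k → X
  | 0, a, x => f a x
  | k + 1, a, x => f a.1 (fun i => gifsIter f k (a.2 i) (x i))

/-- The iterated product sets `D_{k+1} ⊆ X_{k+1}`: `D_1 = D^m`, `D_{k+1} = D_k^m`. -/
def gifsProdSet {X : Type*} {m : ℕ} (D : Set X) : ∀ k, Set (GifsSp X m k)
  | 0 => Set.pi Set.univ (fun _ : Fin m => D)
  | k + 1 => Set.pi Set.univ (fun _ : Fin m => gifsProdSet D k)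

/-! By induction on the level, two points of `D_k` are moved by `f_α` at most
`φ^[k+1] (diam D)` apart: the sup metric on `X^m` turns coordinatewise bounds `r` into the
bound `φ r` after one more application of some `fᵢ`, as `φ` is monotone. These bounds tend to
`0` even when `diam D = 0`, because `0 ≤ φ^[k] t ≤ φ^[k] (t + 1) → 0`. -/

section Witness

variable {φ : ℝ → ℝ}

lemma iterate_nonneg (hφ_nonneg : ∀ t, 0 ≤ t → 0 ≤ φ t) (k : ℕ) {t : ℝ} (ht : 0 ≤ t) :
    0 ≤ φ^[k] t :=
  Set.MapsTo.iterate (f := φ) (s := Set.Ici 0) (fun _ hs => hφ_nonneg _ hs) k ht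

lemma iterate_le_iterate_of_le (hφ_mono : MonotoneOn φ (Set.Ici 0))
    (hφ_nonneg : ∀ t, 0 ≤ t → 0 ≤ φ t) (k : ℕ) {s t : ℝ} (hs : 0 ≤ s) (hst : s ≤ t) :
    φ^[k] s ≤ φ^[k] t := by
  induction k with
  | zero => exact hst
  | succ k ih =>
    rw [Function.iterate_succ_apply', Function.iterate_succ_apply']
    exact hφ_mono (iterate_nonneg hφ_nonneg k hs)
      (iterate_nonneg hφ_nonneg k (hs.trans hst)) ih

lemma tendsto_iterate_of_nonneg (hφ_mono : MonotoneOn φ (Set.Ici 0))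
    (hφ_nonneg : ∀ t, 0 ≤ t → 0 ≤ φ t)
    (hφ_iter : ∀ t > 0, Tendsto (fun k => φ^[k] t) atTop (nhds 0)) {t : ℝ} (ht : 0 ≤ t) :
    Tendsto (fun k => φ^[k] t) atTop (nhds 0) :=
  tendsto_of_tendsto_of_tendsto_of_le_of_le tendsto_const_nhds (hφ_iter (t + 1) (by linarith))
    (fun k => iterate_nonneg hφ_nonneg k ht)
    (fun k => iterate_le_iterate_of_le hφ_mono hφ_nonneg k ht (by linarith))

end Witness

section Contraction

variable {X : Type*} [MetricSpace X] {n m : ℕ} {φ : ℝ → ℝ} {f : Fin n → (Fin m → X) → X}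

lemma dist_apply_le_of_forall_dist_le (hφ_mono : MonotoneOn φ (Set.Ici 0))
    (hf : ∀ i, ∀ x y : Fin m → X, dist (f i x) (f i y) ≤ φ (dist x y))
    (i : Fin n) {x y : Fin m → X} {r : ℝ} (hr : 0 ≤ r) (hxy : ∀ j, dist (x j) (y j) ≤ r) :
    dist (f i x) (f i y) ≤ φ r :=
  (hf i x y).trans (hφ_mono dist_nonneg hr ((dist_pi_le_iff hr).2 hxy))

lemma dist_gifsIter_le (hφ_mono : MonotoneOn φ (Set.Ici 0))
    (hφ_nonneg : ∀ t, 0 ≤ t → 0 ≤ φ t)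
    (hf : ∀ i, ∀ x y : Fin m → X, dist (f i x) (f i y) ≤ φ (dist x y))
    {D : Set X} {r : ℝ} (hr : 0 ≤ r) (hD : ∀ a ∈ D, ∀ b ∈ D, dist a b ≤ r) :
    ∀ k (α : GifsCode n m k), ∀ x ∈ gifsProdSet D k, ∀ y ∈ gifsProdSet D k,
      dist (gifsIter f k α x) (gifsIter f k α y) ≤ φ^[k + 1] r
  | 0, α, x, hx, y, hy =>
    dist_apply_le_of_forall_dist_le hφ_mono hf α hr fun j =>
      hD _ (hx j (Set.mem_univ j)) _ (hy j (Set.mem_univ j))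
  | k + 1, α, x, hx, y, hy => by
    rw [Function.iterate_succ_apply']
    exact dist_apply_le_of_forall_dist_le hφ_mono hf α.1 (iterate_nonneg hφ_nonneg _ hr)
      fun j => dist_gifsIter_le hφ_mono hφ_nonneg hf hr hD k (α.2 j)
        _ (hx j (Set.mem_univ j)) _ (hy j (Set.mem_univ j))

lemma diam_gifsIter_image_le (hφ_mono : MonotoneOn φ (Set.Ici 0))
    (hφ_nonneg : ∀ t, 0 ≤ t → 0 ≤ φ t)
    (hf : ∀ i, ∀ x y : Fin m → X, dist (f i x) (f i y) ≤ φ (dist x y))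
    {D : Set X} (hD : Bornology.IsBounded D) (k : ℕ) (α : GifsCode n m k) :
    diam (gifsIter f k α '' gifsProdSet D k) ≤ φ^[k + 1] (diam D) := by
  apply diam_le_of_forall_dist_le (iterate_nonneg hφ_nonneg _ diam_nonneg)
  rintro _ ⟨x, hx, rfl⟩ _ ⟨y, hy, rfl⟩
  exact dist_gifsIter_le hφ_mono hφ_nonneg hf diam_nonneg
    (fun _ ha _ hb => dist_le_diam_of_mem hD ha hb) k α x hx y hy

end Contraction

theorem stmt10_general {X : Type*} [MetricSpace X]
    {n m : ℕ}
    (φ : ℝ → ℝ) (hφ_mono : MonotoneOn φ (Set.Ici 0))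
    (hφ_nonneg : ∀ t, 0 ≤ t → 0 ≤ φ t)
    (hφ_iter : ∀ t > 0, Tendsto (fun k => φ^[k] t) atTop (nhds 0))
    (f : Fin n → (Fin m → X) → X)
    (hf : ∀ i, ∀ x y : Fin m → X, dist (f i x) (f i y) ≤ φ (dist x y))
    (D : Set X) (hD₂ : IsCompact D) :
    (∀ k (α : GifsCode n m k),
      diam (gifsIter f k α '' gifsProdSet D k) ≤ φ^[k + 1] (diam D)) ∧
    Tendsto (fun k => ⨆ α : GifsCode n m k, diam (gifsIter f k α '' gifsProdSet D k))
      atTop (nhds 0) := by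
  have hdiam := diam_gifsIter_image_le hφ_mono hφ_nonneg hf hD₂.isBounded (n := n)
  have hbound : Tendsto (fun k => φ^[k + 1] (diam D)) atTop (nhds 0) :=
    (tendsto_add_atTop_iff_nat 1).2
      (tendsto_iterate_of_nonneg hφ_mono hφ_nonneg hφ_iter diam_nonneg)
  refine ⟨hdiam, tendsto_of_tendsto_of_tendsto_of_le_of_le tendsto_const_nhds hbound
    (fun k => Real.iSup_nonneg fun _ => diam_nonneg) fun k => ?_⟩
  exact Real.iSup_le (hdiam k) (iterate_nonneg hφ_nonneg _ diam_nonneg)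

/-- For a GIFS with common witness `φ` and any nonempty compact `D`,
`max{diam f_α(D_k) : α ∈ ₖΩ} ≤ φ^(k)(diam D)` and this maximum tends to `0`.
(The index `k : ℕ` corresponds to the paper's level `k+1`.) -/
theorem stmt10 {X : Type*} [MetricSpace X] [CompleteSpace X]
    {n m : ℕ} (hn : 0 < n)
    (φ : ℝ → ℝ) (hφ_mono : MonotoneOn φ (Set.Ici 0))
    (hφ_nonneg : ∀ t, 0 ≤ t → 0 ≤ φ t)
    (hφ_iter : ∀ t > 0, Tendsto (fun k => φ^[k] t) atTop (nhds 0))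
    (f : Fin n → (Fin m → X) → X)
    (hf : ∀ i, ∀ x y : Fin m → X, dist (f i x) (f i y) ≤ φ (dist x y))
    (D : Set X) (hD₁ : D.Nonempty) (hD₂ : IsCompact D) :
    (∀ k (α : GifsCode n m k),
      diam (gifsIter f k α '' gifsProdSet D k) ≤ φ^[k + 1] (diam D)) ∧
    Tendsto (fun k => ⨆ α : GifsCode n m k, diam (gifsIter f k α '' gifsProdSet D k))
      atTop (nhds 0) :=
  stmt10_general φ hφ_mono hφ_nonneg hφ_iter f hf D hD₂
end

section
/- Let f : X^m → X satisfy d(f(x),f(y)) ≤ φ(d_m(x,y)) for a nondecreasing φ with φ^(k)(t) → 0 for all t > 0, where X is a complete metric space. Then the map g : X → X defined by g(x) := f(x,...,x) is a Matkowski contraction and hence has a unique fixed point; moreover this fixed point belongs to the attractor A_F of any GIFS F containing f. -/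
/-!
A comparison function `φ` (nondecreasing, with `φ^[k] t → 0`) satisfies `φ t < t` for `t > 0`,
so a `φ`-contraction `g` is nonexpansive, hence continuous, and has at most one fixed point.
Its orbits are Cauchy by Matkowski's argument: once `φ^[N] d(g a, a) < ε - φ ε`, the ball of
radius `ε` around `g^[N] a` contains the whole tail of the orbit, because
`d(g^[N+k+1] a, g^[N] a) ≤ φ (d(g^[N+k] a, g^[N] a)) + φ^[N] d(g a, a)`.
The diagonal map `x ↦ f (x, …, x)` is a `φ`-contraction for the maximum metric and maps the
attractor into itself, so starting the orbit inside the (closed) attractor puts the fixed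
point there.
-/

open TopologicalSpace Filter Function Topology Set

theorem MonotoneOn.apply_lt_self_of_tendsto_iterate {φ : ℝ → ℝ}
    (hmono : MonotoneOn φ (Ici 0)) (hiter : ∀ t > 0, Tendsto (fun k => φ^[k] t) atTop (𝓝 0))
    {t : ℝ} (ht : 0 < t) : φ t < t := by
  by_contra! h
  have h_ge : ∀ k, t ≤ φ^[k] t := by
    intro k
    induction k with
    | zero => exact le_rfl
    | succ k ih =>
      rw [iterate_succ_apply']
      exact h.trans (hmono ht.le (ht.le.trans ih) ih)
  obtain ⟨k, hk⟩ := ((hiter t ht).eventually_lt_const ht).exists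
  exact (h_ge k).not_gt hk

section Contraction

variable {X : Type*} [MetricSpace X] {φ : ℝ → ℝ} {g : X → X}

theorem dist_apply_le_dist_of_lt_self (hlt : ∀ t > 0, φ t < t)
    (hg : ∀ x y, dist (g x) (g y) ≤ φ (dist x y)) (x y : X) :
    dist (g x) (g y) ≤ dist x y := by
  rcases eq_or_ne x y with rfl | hxy
  · simp
  · exact (hg x y).trans (hlt _ (dist_pos.2 hxy)).le

theorem Function.IsFixedPt.eq_of_lt_self (hlt : ∀ t > 0, φ t < t)
    (hg : ∀ x y, dist (g x) (g y) ≤ φ (dist x y)) {p q : X} (hp : IsFixedPt g p)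
    (hq : IsFixedPt g q) : p = q := by
  by_contra hpq
  have h := hg p q
  rw [hp.eq, hq.eq] at h
  exact h.not_gt (hlt _ (dist_pos.2 hpq))

theorem dist_iterate_succ_le (hmono : MonotoneOn φ (Ici 0))
    (hg : ∀ x y, dist (g x) (g y) ≤ φ (dist x y)) (a : X) (k : ℕ) :
    dist (g^[k + 1] a) (g^[k] a) ≤ φ^[k] (dist (g a) a) := by
  induction k with
  | zero => simp
  | succ k ih =>
    calc dist (g^[k + 2] a) (g^[k + 1] a) = dist (g (g^[k + 1] a)) (g (g^[k] a)) := by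
          rw [iterate_succ_apply', iterate_succ_apply' g k]
      _ ≤ φ (dist (g^[k + 1] a) (g^[k] a)) := hg _ _
      _ ≤ φ (φ^[k] (dist (g a) a)) := hmono dist_nonneg (dist_nonneg.trans ih) ih
      _ = φ^[k + 1] (dist (g a) a) := (iterate_succ_apply' φ k _).symm

theorem dist_iterate_add_lt (hmono : MonotoneOn φ (Ici 0))
    (hg : ∀ x y, dist (g x) (g y) ≤ φ (dist x y)) (a : X) {ε : ℝ} (hε : 0 < ε) {N : ℕ}
    (hN : φ^[N] (dist (g a) a) < ε - φ ε) (k : ℕ) : dist (g^[N + k] a) (g^[N] a) < ε := by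
  induction k with
  | zero => simpa using hε
  | succ k ih =>
    have h_step : dist (g^[N + k + 1] a) (g^[N + 1] a) ≤ φ (dist (g^[N + k] a) (g^[N] a)) := by
      simpa only [iterate_succ_apply'] using hg (g^[N + k] a) (g^[N] a)
    calc dist (g^[N + (k + 1)] a) (g^[N] a)
        ≤ dist (g^[N + k + 1] a) (g^[N + 1] a) + dist (g^[N + 1] a) (g^[N] a) :=
          dist_triangle _ _ _
      _ ≤ φ ε + φ^[N] (dist (g a) a) :=
          add_le_add (h_step.trans (hmono dist_nonneg hε.le ih.le))
            (dist_iterate_succ_le hmono hg a N)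
      _ < ε := by linarith

theorem cauchySeq_iterate_of_tendsto_iterate (hmono : MonotoneOn φ (Ici 0))
    (hiter : ∀ t > 0, Tendsto (fun k => φ^[k] t) atTop (𝓝 0))
    (hg : ∀ x y, dist (g x) (g y) ≤ φ (dist x y)) (a : X) : CauchySeq fun k => g^[k] a := by
  rcases eq_or_ne (g a) a with ha | ha
  · simp only [iterate_fixed ha]
    exact cauchySeq_const a
  rw [Metric.cauchySeq_iff']
  intro ε hε
  have h_gap : 0 < ε - φ ε := sub_pos.2 (hmono.apply_lt_self_of_tendsto_iterate hiter hε)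
  obtain ⟨N, hN⟩ := ((hiter _ (dist_pos.2 ha)).eventually_lt_const h_gap).exists
  refine ⟨N, fun n hn => ?_⟩
  obtain ⟨k, rfl⟩ := Nat.exists_eq_add_of_le hn
  exact dist_iterate_add_lt hmono hg a hε hN k

theorem exists_isFixedPt_mem_of_mapsTo [CompleteSpace X] (hmono : MonotoneOn φ (Ici 0))
    (hiter : ∀ t > 0, Tendsto (fun k => φ^[k] t) atTop (𝓝 0))
    (hg : ∀ x y, dist (g x) (g y) ≤ φ (dist x y)) {S : Set X} (hS : IsClosed S)
    (hmaps : MapsTo g S S) {a : X} (ha : a ∈ S) : ∃ p ∈ S, IsFixedPt g p := by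
  obtain ⟨p, hp⟩ :=
    cauchySeq_tendsto_of_complete (cauchySeq_iterate_of_tendsto_iterate hmono hiter hg a)
  have hlt : ∀ t > 0, φ t < t := fun _ => hmono.apply_lt_self_of_tendsto_iterate hiter
  have hg_cont : Continuous g :=
    (LipschitzWith.mk_one (dist_apply_le_dist_of_lt_self hlt hg)).continuous
  exact ⟨p, hS.mem_of_tendsto hp (Eventually.of_forall fun k => hmaps.iterate k ha),
    isFixedPt_of_tendsto_iterate hp hg_cont.continuousAt⟩

end Contraction

theorem dist_apply_const_le {X ι : Type*} [MetricSpace X] [Fintype ι] {φ : ℝ → ℝ}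
    (hmono : MonotoneOn φ (Ici 0)) {f : (ι → X) → X}
    (hf : ∀ x y : ι → X, dist (f x) (f y) ≤ φ (dist x y)) (x y : X) :
    dist (f fun _ => x) (f fun _ => y) ≤ φ (dist x y) :=
  (hf _ _).trans (hmono dist_nonneg dist_nonneg (dist_pi_const_le x y))

theorem mapsTo_apply_const_of_eq_iUnion_image {X ι κ : Type*} {F : κ → (ι → X) → X}
    {A : Set X} (hA : A = ⋃ i, F i '' pi univ fun _ => A) (i : κ) :
    MapsTo (fun x => F i fun _ => x) A A := by
  intro x hx
  rw [hA]
  exact mem_iUnion.2 ⟨i, fun _ => x, fun _ _ => hx, rfl⟩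

theorem stmt17_general {X : Type*} [MetricSpace X] [CompleteSpace X]
    {n m : ℕ}
    (φ : ℝ → ℝ) (hφ_mono : MonotoneOn φ (Set.Ici 0))
    (hφ_nonneg : ∀ t, 0 ≤ t → 0 ≤ φ t)
    (hφ_iter : ∀ t > 0, Tendsto (fun k => φ^[k] t) atTop (nhds 0))
    (f : (Fin m → X) → X)
    (hf : ∀ x y : Fin m → X, dist (f x) (f y) ≤ φ (dist x y))
    (F : Fin n → (Fin m → X) → X) (i₀ : Fin n) (hi₀ : F i₀ = f)
    (A : NonemptyCompacts X)
    (hA : (A : Set X) = ⋃ i, F i '' Set.pi Set.univ (fun _ : Fin m => (A : Set X))) :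
    (∃ ψ : ℝ → ℝ, MonotoneOn ψ (Set.Ici 0) ∧ (∀ t, 0 ≤ t → 0 ≤ ψ t) ∧
      (∀ t > 0, Tendsto (fun k => ψ^[k] t) atTop (nhds 0)) ∧
      ∀ x y : X, dist (f (fun _ => x)) (f (fun _ => y)) ≤ ψ (dist x y)) ∧
    ∃ p : X, f (fun _ => p) = p ∧ (∀ q : X, f (fun _ => q) = q → q = p) ∧
      p ∈ (A : Set X) := by
  have hg := dist_apply_const_le hφ_mono hf
  have hmaps : MapsTo (fun x => f fun _ => x) A A :=
    hi₀ ▸ mapsTo_apply_const_of_eq_iUnion_image hA i₀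
  obtain ⟨p, hpA, hp⟩ := exists_isFixedPt_mem_of_mapsTo hφ_mono hφ_iter hg
    A.isCompact.isClosed hmaps A.nonempty.some_mem
  have hlt : ∀ t > 0, φ t < t := fun _ => hφ_mono.apply_lt_self_of_tendsto_iterate hφ_iter
  exact ⟨⟨φ, hφ_mono, hφ_nonneg, hφ_iter, hg⟩, p, hp,
    fun q hq => IsFixedPt.eq_of_lt_self hlt hg hq hp, hpA⟩

/-- If `f : X^m → X` is a generalized Matkowski contraction, then the diagonal map
`g(x) := f(x,...,x)` is a Matkowski contraction, hence has a unique fixed point;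
moreover this fixed point belongs to the attractor of any GIFS containing `f`. -/
theorem stmt17 {X : Type*} [MetricSpace X] [CompleteSpace X] [Nonempty X]
    {n m : ℕ}
    (φ : ℝ → ℝ) (hφ_mono : MonotoneOn φ (Set.Ici 0))
    (hφ_nonneg : ∀ t, 0 ≤ t → 0 ≤ φ t)
    (hφ_iter : ∀ t > 0, Tendsto (fun k => φ^[k] t) atTop (nhds 0))
    (f : (Fin m → X) → X)
    (hf : ∀ x y : Fin m → X, dist (f x) (f y) ≤ φ (dist x y))
    (F : Fin n → (Fin m → X) → X) (i₀ : Fin n) (hi₀ : F i₀ = f)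
    (hF : ∀ i, ∀ x y : Fin m → X, dist (F i x) (F i y) ≤ φ (dist x y))
    (A : NonemptyCompacts X)
    (hA : (A : Set X) = ⋃ i, F i '' Set.pi Set.univ (fun _ : Fin m => (A : Set X))) :
    (∃ ψ : ℝ → ℝ, MonotoneOn ψ (Set.Ici 0) ∧ (∀ t, 0 ≤ t → 0 ≤ ψ t) ∧
      (∀ t > 0, Tendsto (fun k => ψ^[k] t) atTop (nhds 0)) ∧
      ∀ x y : X, dist (f (fun _ => x)) (f (fun _ => y)) ≤ ψ (dist x y)) ∧
    ∃ p : X, f (fun _ => p) = p ∧ (∀ q : X, f (fun _ => q) = q → q = p) ∧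
      p ∈ (A : Set X) :=
  stmt17_general φ hφ_mono hφ_nonneg hφ_iter f hf F i₀ hi₀ A hA
end
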